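/- arXiv:1412.4386 — 2 statements merged into one kernel-verified Lean document; each statement's English description precedes it below -/
import Mathlib

section
/- Let E be a real Banach space, ∂_w a weak subdifferential, and f : E → ]−∞,+∞] proper, lower semicontinuous, and with insignificant downside. Then gra ∂_w f is stably r_L-dense in E × E*: for every (y,y*) ∈ E × E* there exists M ≥ 0 such that inf{ r_L(s − y, s* − y*) : (s,s*) ∈ gra ∂_w f, ‖s − y‖ ≤ M, ‖s* − y*‖ ≤ M } = 0. -/
/-
Fix `(y, y*)` and tilt `f` by the continuous convex function `h x = ½‖x - y‖² - ⟨x, y*⟩`.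
Because `f` has insignificant downside, `f + h` grows quadratically, so it is bounded below and
its sublevel set at a point of `dom f` lies in a ball `B(y, r)`. Ekeland's variational principle
yields `x` in that sublevel set at which `f + h + δ‖· - x‖` has a strict global minimum. The two
axioms of `∂_w` then give `s* ∈ ∂_w f(x)`, `z₁ ∈ ∂h(x)`, `z₂ ∈ ∂(δ‖· - x‖)(x)` with
`s* + z₁ + z₂ = 0`. Here `z₁ + y*` lies in the duality map of `x - y` and `‖z₂‖ ≤ δ`, whence
`‖s* - y*‖ ≤ r + δ` and `r_L(x - y, s* - y*) ≤ δ (2r + δ)`; the bound `r + 1` does not depend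
on `δ`.
-/

open Pointwise

/-- The convex subdifferential of a continuous convex real function `h` at `x`. -/
def convSubdiff {E : Type*} [NormedAddCommGroup E] [NormedSpace ℝ E]
    (h : E → ℝ) (x : E) : Set (StrongDual ℝ E) :=
  {z | ∀ y : E, h x + z (y - x) ≤ h y}

/-- A weak subdifferential: a rule associating with each proper lower semicontinuous
`f : E → ]-∞,+∞]` a multifunction `E ⇉ E*` such that (i) `0 ∈ ∂_w f(x)` whenever `f`
attains a strict global minimum at `x`, and (ii) `∂_w(f + h)(x) ⊆ ∂_w f(x) + ∂h(x)`
for every continuous convex real function `h` on `E`. -/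
structure WeakSubdiff (E : Type*) [NormedAddCommGroup E] [NormedSpace ℝ E] where
  sd : (E → EReal) → E → Set (StrongDual ℝ E)
  zero_mem : ∀ f : E → EReal, (∃ x, f x ≠ ⊤) → (∀ x, f x ≠ ⊥) →
    LowerSemicontinuous f →
    ∀ x : E, (∀ y : E, y ≠ x → f x < f y) → 0 ∈ sd f x
  sum_rule : ∀ f : E → EReal, (∃ x, f x ≠ ⊤) → (∀ x, f x ≠ ⊥) →
    LowerSemicontinuous f →
    ∀ h : E → ℝ, Continuous h → ConvexOn ℝ Set.univ h →
    ∀ x : E, sd (fun z => f z + (h z : EReal)) x ⊆ sd f x + convSubdiff h x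

/-- `r_L(x, x*) = ½‖x‖² + ½‖x*‖² + ⟨x, x*⟩`. -/
noncomputable def rL {E : Type*} [NormedAddCommGroup E] [NormedSpace ℝ E]
    (x : E) (x' : StrongDual ℝ E) : ℝ :=
  1 / 2 * ‖x‖ ^ 2 + 1 / 2 * ‖x'‖ ^ 2 + x' x

/-- `A ⊆ E × E*` is stably `r_L`-dense if for every `(y, y*)` there is `M ≥ 0` such that
the infimum of `r_L(s - y, s* - y*)` over `(s, s*) ∈ A` with `‖s - y‖ ≤ M` and
`‖s* - y*‖ ≤ M` is `0` (since `r_L ≥ 0`, this means for every `ε > 0` there is such a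
point with `r_L` value `< ε`). -/
def StablyRLDense {E : Type*} [NormedAddCommGroup E] [NormedSpace ℝ E]
    (A : Set (E × StrongDual ℝ E)) : Prop :=
  ∀ (y : E) (y' : StrongDual ℝ E), ∃ M : ℝ, 0 ≤ M ∧
    ∀ ε > (0 : ℝ), ∃ p ∈ A, ‖p.1 - y‖ ≤ M ∧ ‖p.2 - y'‖ ≤ M ∧
      rL (p.1 - y) (p.2 - y') < ε

/-- `f` has insignificant downside: `f(x) ≥ -a₀‖x‖² - b₀‖x‖ - c₀` with `a₀ < ½`. -/
def InsigDownside {E : Type*} [NormedAddCommGroup E] [NormedSpace ℝ E]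
    (f : E → EReal) : Prop :=
  ∃ a₀ b₀ c₀ : ℝ, a₀ < 1 / 2 ∧
    ∀ x : E, ((-a₀ * ‖x‖ ^ 2 - b₀ * ‖x‖ - c₀ : ℝ) : EReal) ≤ f x

open Set Filter Topology

theorem exists_mem_forall_le_add_of_bddBelow {α : Type*} {G : α → ℝ} {s : Set α} (hs : s.Nonempty)
    (hG : BddBelow (G '' s)) {δ : ℝ} (hδ : 0 < δ) : ∃ x ∈ s, ∀ z ∈ s, G x ≤ G z + δ := by
  obtain ⟨_, ⟨x, hx, rfl⟩, hlt⟩ := Real.lt_sInf_add_pos (hs.image G) hδ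
  exact ⟨x, hx, fun z hz => by linarith [csInf_le hG (mem_image_of_mem G hz)]⟩

theorem le_of_forall_pos_le_add_mul {a b c : ℝ} (h : ∀ t > 0, a ≤ b + t * c) : a ≤ b := by
  have hlim : Tendsto (fun t => b + t * c) (𝓝[>] 0) (𝓝 b) :=
    ((by fun_prop : Continuous fun t : ℝ => b + t * c).tendsto' 0 b (by simp)).mono_left
      nhdsWithin_le_nhds
  exact ge_of_tendsto hlim (eventually_nhdsWithin_of_forall h)

theorem LowerSemicontinuous.add_coe {X : Type*} [TopologicalSpace X] {f : X → EReal}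
    (hf : LowerSemicontinuous f) {h : X → ℝ} (hh : Continuous h) :
    LowerSemicontinuous fun x => f x + (h x : EReal) :=
  hf.add' (continuous_coe_real_ereal.comp hh).lowerSemicontinuous fun _ =>
    EReal.continuousAt_add (Or.inr (EReal.coe_ne_bot _)) (Or.inr (EReal.coe_ne_top _))

theorem isBounded_sublevel_of_quadratic_minorant {E : Type*} [SeminormedAddCommGroup E]
    {φ : E → EReal} {γ c : ℝ} (hγ : 0 < γ)
    (hφ : ∀ x, ((γ * ‖x‖ ^ 2 - c : ℝ) : EReal) ≤ φ x) {K : EReal} (hK : K ≠ ⊤) :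
    Bornology.IsBounded {x | φ x ≤ K} := by
  refine isBounded_iff_forall_norm_le.2 ⟨1 / 2 + (K.toReal + c) / γ / 2, fun x hx => ?_⟩
  have hx' : γ * ‖x‖ ^ 2 - c ≤ K.toReal :=
    EReal.coe_le_coe_iff.1 ((hφ x).trans (hx.trans (EReal.le_coe_toReal hK)))
  have : ‖x‖ ^ 2 ≤ (K.toReal + c) / γ := by rw [le_div_iff₀ hγ]; linarith
  nlinarith [sq_nonneg (‖x‖ - 1)]

section Ekeland

variable {X : Type*} [MetricSpace X]

-- Ekeland's variational principle.
theorem LowerSemicontinuous.exists_le_forall_lt_add_dist [CompleteSpace X] {G : X → ℝ}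
    (hG : LowerSemicontinuous G) (hbdd : BddBelow (range G)) {ε : ℝ} (hε : 0 < ε) (x₀ : X) :
    ∃ x, G x ≤ G x₀ ∧ ∀ z ≠ x, G x < G z + ε * dist z x := by
  set S : X → Set X := fun x => {z | G z + ε * dist z x ≤ G x}
  have S_self (x : X) : x ∈ S x := by simp [S]
  have S_trans {x z w : X} (hz : z ∈ S x) (hw : w ∈ S z) : w ∈ S x := by
    simp only [S, mem_ofPred_eq] at *
    nlinarith [dist_triangle w z x]
  have S_closed (x : X) : IsClosed (S x) :=
    (hG.add (by fun_prop : Continuous fun z => ε * dist z x).lowerSemicontinuous).isClosed_preimage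
      (G x)
  choose next next_mem next_le using fun (n : ℕ) (x : X) =>
    exists_mem_forall_le_add_of_bddBelow ⟨x, S_self x⟩ (hbdd.mono (image_subset_range G (S x)))
      (by positivity : (0 : ℝ) < (1 / 2) ^ n)
  let u : ℕ → X := fun n => Nat.rec x₀ next n
  have u_mem {m n : ℕ} (hmn : m ≤ n) : u n ∈ S (u m) := by
    induction n, hmn using Nat.le_induction with
    | base => exact S_self _
    | succ n _ ih => exact S_trans ih (next_mem n (u n))
  set r : ℕ → ℝ := fun n => (1 / 2) ^ n / ε
  have radius (n : ℕ) {z : X} (hz : z ∈ S (u (n + 1))) : dist z (u (n + 1)) ≤ r n := by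
    have hle := next_le n (u n) z (S_trans (next_mem n (u n)) hz)
    have hz' : G z + ε * dist z (next n (u n)) ≤ G (next n (u n)) := hz
    rw [le_div_iff₀ hε]
    linarith
  have r_lim : Tendsto r atTop (𝓝 0) := by
    simpa [r] using (tendsto_pow_atTop_nhds_zero_of_lt_one (r := (1 : ℝ) / 2)
      (by norm_num) (by norm_num)).div_const ε
  obtain ⟨x, hx⟩ : ∃ x, Tendsto (fun n => u (n + 1)) atTop (𝓝 x) :=
    cauchySeq_tendsto_of_complete <| cauchySeq_of_le_tendsto_0' r
      (fun n m hnm => dist_comm (u (m + 1)) _ ▸ radius n (u_mem (by omega : n + 1 ≤ m + 1))) r_lim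
  have x_mem (n : ℕ) : x ∈ S (u n) :=
    (S_closed _).mem_of_tendsto hx <|
      eventually_atTop.2 ⟨n, fun m _ => u_mem (by omega : n ≤ m + 1)⟩
  refine ⟨x, ?_, fun z hz => ?_⟩
  · have hx₀ : G x + ε * dist x x₀ ≤ G x₀ := x_mem 0
    nlinarith [mul_nonneg hε.le (dist_nonneg (x := x) (y := x₀))]
  · by_contra! hzx
    have hz_lim : Tendsto (fun n => u (n + 1)) atTop (𝓝 z) :=
      tendsto_iff_dist_tendsto_zero.2 <| squeeze_zero (fun _ => dist_nonneg)
        (fun n => dist_comm z (u (n + 1)) ▸ radius n (S_trans (x_mem (n + 1)) hzx)) r_lim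
    exact hz (tendsto_nhds_unique hz_lim hx)

theorem LowerSemicontinuous.exists_le_forall_lt_add_dist_ereal [CompleteSpace X] {g : X → EReal}
    (hg : LowerSemicontinuous g) {B : ℝ} (hB : ∀ x, (B : EReal) ≤ g x) {ε : ℝ} (hε : 0 < ε)
    {x₀ : X} (hx₀ : g x₀ ≠ ⊤) :
    ∃ x, g x ≤ g x₀ ∧ ∀ z ≠ x, g x < g z + ((ε * dist z x : ℝ) : EReal) := by
  have g_ne_bot (x : X) : g x ≠ ⊥ := ne_bot_of_le_ne_bot (EReal.coe_ne_bot B) (hB x)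
  -- Truncating `g` strictly above `g x₀` gives a real function with the same minimisers.
  set C : ℝ := (g x₀).toReal + 1
  have hx₀C : g x₀ < C := by
    rw [← EReal.coe_toReal hx₀ (g_ne_bot x₀)]
    exact EReal.coe_lt_coe_iff.2 (lt_add_one _)
  set G : X → ℝ := fun x => (min (g x) C).toReal
  have coe_G (x : X) : (G x : EReal) = min (g x) C :=
    EReal.coe_toReal ((min_le_right _ _).trans_lt (EReal.coe_lt_top C)).ne
      (lt_min (g_ne_bot x).bot_lt (EReal.bot_lt_coe C)).ne'
  have hG : LowerSemicontinuous G := by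
    intro x r hr
    have hr' : (r : EReal) < min (g x) C := coe_G x ▸ EReal.coe_lt_coe_iff.2 hr
    filter_upwards [(hg.inf lowerSemicontinuous_const) x r hr'] with z hz
    exact EReal.coe_lt_coe_iff.1 ((coe_G z).symm ▸ hz)
  have hG_bdd : BddBelow (range G) := by
    refine ⟨min B C, forall_mem_range.2 fun x => EReal.coe_le_coe_iff.1 ?_⟩
    rw [coe_G]
    exact le_min ((EReal.coe_le_coe_iff.2 (min_le_left _ _)).trans (hB x))
      (EReal.coe_le_coe_iff.2 (min_le_right _ _))
  obtain ⟨x, hx_le, hx_min⟩ := hG.exists_le_forall_lt_add_dist hG_bdd hε x₀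
  have hx : g x ≤ g x₀ := by
    have : min (g x) C ≤ min (g x₀) C := by
      rw [← coe_G, ← coe_G]; exact EReal.coe_le_coe_iff.2 hx_le
    rwa [min_eq_left hx₀C.le, min_le_iff, or_iff_left (not_le.2 hx₀C)] at this
  refine ⟨x, hx, fun z hz => ?_⟩
  calc g x = G x := by rw [coe_G, min_eq_left (hx.trans hx₀C.le)]
    _ < (G z + ε * dist z x : ℝ) := EReal.coe_lt_coe_iff.2 (hx_min z hz)
    _ ≤ g z + ((ε * dist z x : ℝ) : EReal) := by
      rw [EReal.coe_add, coe_G]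
      exact add_le_add_left (min_le_left _ _) _

end Ekeland

section NormedSpace

variable {E : Type*} [NormedAddCommGroup E] [NormedSpace ℝ E]

theorem StrongDual.norm_le_of_forall_apply_le {q : StrongDual ℝ E} {c : ℝ} (hc : 0 ≤ c)
    (hq : ∀ w, q w ≤ c * ‖w‖) : ‖q‖ ≤ c := by
  refine ContinuousLinearMap.opNorm_le_bound q hc fun w => abs_le.2 ⟨?_, hq w⟩
  have h := hq (-w)
  rw [map_neg, norm_neg] at h
  linarith

theorem norm_le_of_mem_convSubdiff_mul_norm_sub {δ : ℝ} (hδ : 0 ≤ δ) {a : E}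
    {z : StrongDual ℝ E} (hz : z ∈ convSubdiff (fun x => δ * ‖x - a‖) a) : ‖z‖ ≤ δ :=
  StrongDual.norm_le_of_forall_apply_le hδ fun w => by simpa using hz (a + w)

theorem add_mem_convSubdiff_half_sq_norm {y x : E} {y' z : StrongDual ℝ E}
    (hz : z ∈ convSubdiff (fun x => 1 / 2 * ‖x - y‖ ^ 2 - y' x) x) :
    z + y' ∈ convSubdiff (fun w => 1 / 2 * ‖w‖ ^ 2) (x - y) := by
  intro w
  have h : 1 / 2 * ‖x - y‖ ^ 2 - y' x + z (w + y - x) ≤ 1 / 2 * ‖w + y - y‖ ^ 2 - y' (w + y) :=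
    hz _
  rw [add_sub_cancel_right] at h
  show 1 / 2 * ‖x - y‖ ^ 2 + (z + y') (w - (x - y)) ≤ 1 / 2 * ‖w‖ ^ 2
  rw [show w - (x - y) = w + y - x by abel]
  simp only [add_apply, map_add, map_sub] at h ⊢
  linarith

theorem norm_le_of_mem_convSubdiff_half_sq_norm {v : E} {q : StrongDual ℝ E}
    (hq : q ∈ convSubdiff (fun w => 1 / 2 * ‖w‖ ^ 2) v) : ‖q‖ ≤ ‖v‖ := by
  refine StrongDual.norm_le_of_forall_apply_le (norm_nonneg v) fun w =>
    le_of_forall_pos_le_add_mul (c := ‖w‖ ^ 2 / 2) fun t ht => ?_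
  have h : 1 / 2 * ‖v‖ ^ 2 + q (v + t • w - v) ≤ 1 / 2 * ‖v + t • w‖ ^ 2 := hq _
  have hn : ‖v + t • w‖ ≤ ‖v‖ + t * ‖w‖ := by
    simpa [norm_smul, abs_of_pos ht] using norm_add_le v (t • w)
  simp only [add_sub_cancel_left, map_smul, smul_eq_mul] at h
  nlinarith [pow_le_pow_left₀ (norm_nonneg _) hn 2]

theorem sq_norm_le_of_mem_convSubdiff_half_sq_norm {v : E} {q : StrongDual ℝ E}
    (hq : q ∈ convSubdiff (fun w => 1 / 2 * ‖w‖ ^ 2) v) : ‖v‖ ^ 2 ≤ q v := by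
  refine le_of_forall_pos_le_add_mul (c := ‖v‖ ^ 2 / 2) fun t ht => ?_
  have h : 1 / 2 * ‖v‖ ^ 2 + q ((1 - t) • v - v) ≤ 1 / 2 * ‖(1 - t) • v‖ ^ 2 := hq _
  rw [show (1 - t) • v - v = -t • v by module, map_smul, norm_smul, mul_pow, Real.norm_eq_abs,
    sq_abs, smul_eq_mul] at h
  nlinarith

theorem convexOn_univ_mul_norm_sub {δ : ℝ} (hδ : 0 ≤ δ) (a : E) :
    ConvexOn ℝ univ fun x : E => δ * ‖x - a‖ := by
  simpa [dist_eq_norm] using (convexOn_univ_dist a).smul hδ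

theorem convexOn_univ_half_sq_norm_sub_sub (y : E) (y' : StrongDual ℝ E) :
    ConvexOn ℝ univ fun x : E => 1 / 2 * ‖x - y‖ ^ 2 - y' x := by
  have hsq : ConvexOn ℝ univ fun x : E => 1 / 2 * ‖x - y‖ ^ 2 := by
    simpa [dist_eq_norm] using ((convexOn_univ_dist y).pow (fun _ _ => dist_nonneg) 2).smul
      (by norm_num : (0 : ℝ) ≤ 1 / 2)
  exact hsq.sub ((y' : E →ₗ[ℝ] ℝ).concaveOn convex_univ)

theorem rL_neg_add_le {v : E} {q z : StrongDual ℝ E} (hq : ‖q‖ ≤ ‖v‖) (hqv : ‖v‖ ^ 2 ≤ q v)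
    {δ : ℝ} (hz : ‖z‖ ≤ δ) : rL v (-(q + z)) ≤ δ * (2 * ‖v‖ + δ) := by
  have hqz : ‖q + z‖ ≤ ‖v‖ + δ := (norm_add_le q z).trans (add_le_add hq hz)
  have hzv : -z v ≤ δ * ‖v‖ :=
    (neg_le_abs _).trans ((z.le_opNorm v).trans (by gcongr))
  rw [rL, norm_neg, neg_apply, add_apply]
  nlinarith [pow_le_pow_left₀ (norm_nonneg _) hqz 2, norm_nonneg v, (norm_nonneg z).trans hz]

theorem InsigDownside.exists_quadratic_minorant {f : E → EReal} (hf : InsigDownside f) (y : E)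
    (y' : StrongDual ℝ E) : ∃ γ > 0, ∃ c : ℝ, ∀ x,
      ((γ * ‖x‖ ^ 2 - c : ℝ) : EReal) ≤ f x + ((1 / 2 * ‖x - y‖ ^ 2 - y' x : ℝ) : EReal) := by
  obtain ⟨a, b, c₀, ha, hfa⟩ := hf
  set α := 1 / 2 - a
  set β := b + ‖y‖ + ‖y'‖
  have hα : 0 < α := sub_pos.2 ha
  refine ⟨α / 2, by positivity, c₀ + β ^ 2 / (2 * α), fun x => ?_⟩
  have hxy : (‖x‖ - ‖y‖) ^ 2 ≤ ‖x - y‖ ^ 2 := sq_le_sq' (abs_le.1 (abs_norm_sub_norm_le x y)).1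
    (abs_le.1 (abs_norm_sub_norm_le x y)).2
  have hy'x : y' x ≤ ‖y'‖ * ‖x‖ := (le_abs_self _).trans (y'.le_opNorm x)
  have hsq : (α * ‖x‖ - β) ^ 2 / (2 * α) = α / 2 * ‖x‖ ^ 2 - β * ‖x‖ + β ^ 2 / (2 * α) := by
    field_simp; ring
  have hreal : α / 2 * ‖x‖ ^ 2 - (c₀ + β ^ 2 / (2 * α)) ≤
      -a * ‖x‖ ^ 2 - b * ‖x‖ - c₀ + (1 / 2 * ‖x - y‖ ^ 2 - y' x) := by
    simp only [α, β] at hsq ⊢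
    nlinarith [div_nonneg (sq_nonneg (α * ‖x‖ - β)) (by positivity : (0 : ℝ) ≤ 2 * α),
      norm_nonneg y, norm_nonneg x]
  calc ((α / 2 * ‖x‖ ^ 2 - (c₀ + β ^ 2 / (2 * α)) : ℝ) : EReal)
      ≤ ((-a * ‖x‖ ^ 2 - b * ‖x‖ - c₀ : ℝ) : EReal) +
          ((1 / 2 * ‖x - y‖ ^ 2 - y' x : ℝ) : EReal) := by
        rw [← EReal.coe_add]; exact EReal.coe_le_coe_iff.2 hreal
    _ ≤ _ := add_le_add_left (hfa x) _

theorem WeakSubdiff.exists_add_add_eq_zero (W : WeakSubdiff E) {f : E → EReal}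
    (hf_top : ∃ x, f x ≠ ⊤) (hf_bot : ∀ x, f x ≠ ⊥) (hf : LowerSemicontinuous f)
    {h₁ h₂ : E → ℝ} (hh₁ : Continuous h₁) (hh₁' : ConvexOn ℝ univ h₁)
    (hh₂ : Continuous h₂) (hh₂' : ConvexOn ℝ univ h₂) {x : E}
    (hx : ∀ y ≠ x, f x + h₁ x + h₂ x < f y + h₁ y + h₂ y) :
    ∃ s ∈ W.sd f x, ∃ z₁ ∈ convSubdiff h₁ x, ∃ z₂ ∈ convSubdiff h₂ x, s + z₁ + z₂ = 0 := by
  obtain ⟨x₀, hx₀⟩ := hf_top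
  set g : E → EReal := fun y => f y + h₁ y
  have hg_top : g x₀ ≠ ⊤ := EReal.add_ne_top hx₀ (EReal.coe_ne_top _)
  have hg_bot (y : E) : g y ≠ ⊥ := EReal.add_ne_bot_iff.2 ⟨hf_bot y, EReal.coe_ne_bot _⟩
  have hg : LowerSemicontinuous g := hf.add_coe hh₁
  have h₀ : (0 : StrongDual ℝ E) ∈ W.sd (fun y => g y + h₂ y) x :=
    W.zero_mem _ ⟨x₀, EReal.add_ne_top hg_top (EReal.coe_ne_top _)⟩
      (fun y => EReal.add_ne_bot_iff.2 ⟨hg_bot y, EReal.coe_ne_bot _⟩) (hg.add_coe hh₂) x hx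
  obtain ⟨t, ht, z₂, hz₂, htz₂⟩ := W.sum_rule g ⟨x₀, hg_top⟩ hg_bot hg h₂ hh₂ hh₂' x h₀
  obtain ⟨s, hs, z₁, hz₁, hsz₁⟩ := W.sum_rule f ⟨x₀, hx₀⟩ hf_bot hf h₁ hh₁ hh₁' x ht
  refine ⟨s, hs, z₁, hz₁, z₂, hz₂, ?_⟩
  simp only at hsz₁ htz₂
  rw [hsz₁, htz₂]

theorem WeakSubdiff.exists_mem_sd_rL_le [CompleteSpace E] (W : WeakSubdiff E) {f : E → EReal}
    (hf_bot : ∀ x, f x ≠ ⊥) (hf : LowerSemicontinuous f) (y : E) (y' : StrongDual ℝ E) {B : ℝ}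
    (hB : ∀ x, (B : EReal) ≤ f x + ((1 / 2 * ‖x - y‖ ^ 2 - y' x : ℝ) : EReal))
    {x₀ : E} (hx₀ : f x₀ ≠ ⊤) {δ : ℝ} (hδ : 0 < δ) :
    ∃ x, f x + ((1 / 2 * ‖x - y‖ ^ 2 - y' x : ℝ) : EReal) ≤
        f x₀ + ((1 / 2 * ‖x₀ - y‖ ^ 2 - y' x₀ : ℝ) : EReal) ∧
      ∃ s ∈ W.sd f x, ‖s - y'‖ ≤ ‖x - y‖ + δ ∧ rL (x - y) (s - y') ≤ δ * (2 * ‖x - y‖ + δ) := by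
  have h_cont : Continuous fun x : E => 1 / 2 * ‖x - y‖ ^ 2 - y' x := by fun_prop
  obtain ⟨x, hx_le, hx_min⟩ := (hf.add_coe h_cont).exists_le_forall_lt_add_dist_ereal hB hδ
    (EReal.add_ne_top hx₀ (EReal.coe_ne_top _))
  obtain ⟨s, hs, z₁, hz₁, z₂, hz₂, hsum⟩ := W.exists_add_add_eq_zero ⟨x₀, hx₀⟩ hf_bot hf
    h_cont (convexOn_univ_half_sq_norm_sub_sub y y') (by fun_prop : Continuous fun z => δ * ‖z - x‖)
    (convexOn_univ_mul_norm_sub hδ.le x) (x := x) fun z hz => by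
      simpa [dist_eq_norm] using hx_min z hz
  have hq := add_mem_convSubdiff_half_sq_norm hz₁
  have hz₂_norm := norm_le_of_mem_convSubdiff_mul_norm_sub hδ.le hz₂
  have hs_eq : s - y' = -(z₁ + y' + z₂) := by
    rw [eq_neg_iff_add_eq_zero, ← hsum]; abel
  refine ⟨x, hx_le, s, hs, ?_, ?_⟩
  · rw [hs_eq, norm_neg]
    exact (norm_add_le _ _).trans (add_le_add (norm_le_of_mem_convSubdiff_half_sq_norm hq) hz₂_norm)
  · rw [hs_eq]
    exact rL_neg_add_le (norm_le_of_mem_convSubdiff_half_sq_norm hq)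
      (sq_norm_le_of_mem_convSubdiff_half_sq_norm hq) hz₂_norm

end NormedSpace

theorem stmt5 {E : Type*} [NormedAddCommGroup E] [NormedSpace ℝ E] [CompleteSpace E]
    (W : WeakSubdiff E) (f : E → EReal)
    (hproper : ∃ x, f x ≠ ⊤) (hnotbot : ∀ x, f x ≠ ⊥)
    (hlsc : LowerSemicontinuous f) (hdown : InsigDownside f) :
    StablyRLDense {p : E × StrongDual ℝ E | p.2 ∈ W.sd f p.1} := by
  intro y y'
  obtain ⟨x₀, hx₀⟩ := hproper
  obtain ⟨γ, hγ, c, hgrowth⟩ := hdown.exists_quadratic_minorant y y'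
  set g : E → EReal := fun x => f x + ((1 / 2 * ‖x - y‖ ^ 2 - y' x : ℝ) : EReal)
  obtain ⟨r, hr, hsub⟩ := (isBounded_sublevel_of_quadratic_minorant hγ hgrowth
    (EReal.add_ne_top hx₀ (EReal.coe_ne_top _) : g x₀ ≠ ⊤)).subset_closedBall_lt 0 y
  refine ⟨r + 1, by linarith, fun ε hε => ?_⟩
  set δ := min 1 (ε / (2 * (2 * r + 1)))
  have hδ : 0 < δ := lt_min one_pos (by positivity)
  have hδ₁ : δ ≤ 1 := min_le_left _ _
  have hδε : δ * (2 * r + 1) < ε :=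
    calc δ * (2 * r + 1) ≤ ε / (2 * (2 * r + 1)) * (2 * r + 1) := by gcongr; exact min_le_right _ _
      _ < ε := by field_simp; linarith
  obtain ⟨x, hx, s, hs, hs_norm, hrL⟩ := W.exists_mem_sd_rL_le hnotbot hlsc y y' (B := -c)
    (fun x => (hgrowth x).trans' (EReal.coe_le_coe_iff.2 (by nlinarith [norm_nonneg x]))) hx₀ hδ
  have hxy : ‖x - y‖ ≤ r := by simpa [dist_eq_norm] using hsub hx
  refine ⟨(x, s), hs, by linarith, by linarith, ?_⟩
  calc rL (x - y) (s - y') ≤ δ * (2 * ‖x - y‖ + δ) := hrL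
    _ ≤ δ * (2 * r + 1) := by gcongr
    _ < ε := hδε
end

section
/- (Minty-type condition for maximal monotonicity) Let E be a real Banach space and S : E ⇉ E* be monotone with gra S norm-closed in E × E*. Assume that for every y ∈ E the multifunction x ↦ S(x) + J(x − y) has hyperdense range. Then S is maximally monotone, i.e. gra S = (gra S)^μ. -/
open Pointwise

/-- The duality mapping `J(x) = {x* : ⟨x, x*⟩ = ‖x‖², ‖x*‖ = ‖x‖}`. -/
def dualityJ {E : Type*} [NormedAddCommGroup E] [NormedSpace ℝ E] (x : E) :
    Set (StrongDual ℝ E) :=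
  {x' | x' x = ‖x‖ ^ 2 ∧ ‖x'‖ = ‖x‖}

/-- The monotone polar `A^μ` of `A ⊆ E × E*`. -/
def monoPolar {E : Type*} [NormedAddCommGroup E] [NormedSpace ℝ E]
    (A : Set (E × StrongDual ℝ E)) : Set (E × StrongDual ℝ E) :=
  {p | ∀ q ∈ A, 0 ≤ (q.2 - p.2) (q.1 - p.1)}

/-- `T : E ⇉ E*` has hyperdense range: for every `y*` there is a sequence
`(tₙ, tₙ*)` in the graph of `T` with `(tₙ)` bounded and `‖tₙ* - y*‖ → 0`. -/
def HyperdenseRange {E : Type*} [NormedAddCommGroup E] [NormedSpace ℝ E]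
    (T : E → Set (StrongDual ℝ E)) : Prop :=
  ∀ y' : StrongDual ℝ E, ∃ t : ℕ → E × StrongDual ℝ E,
    (∀ n, (t n).2 ∈ T (t n).1) ∧ (∃ C : ℝ, ∀ n, ‖(t n).1‖ ≤ C) ∧
    Filter.Tendsto (fun n => ‖(t n).2 - y'‖) Filter.atTop (nhds 0)

/- If `(y, y*)` is monotonically related to `gra S` and `tₙ* = sₙ + jₙ` with `sₙ ∈ S tₙ`,
`jₙ ∈ J(tₙ - y)`, then monotonicity against `(tₙ, sₙ)` gives
`‖tₙ - y‖² ≤ ⟨tₙ - y, tₙ* - y*⟩`, hence `‖tₙ - y‖ ≤ ‖tₙ* - y*‖`. Choosing `tₙ* → y*` by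
hyperdensity forces `tₙ → y` and `sₙ → y*`, so `(y, y*) ∈ gra S` by closedness. -/

open Filter Topology

section
variable {E : Type*} [NormedAddCommGroup E] [NormedSpace ℝ E]

theorem norm_sub_le_of_mem_monoPolar {A : Set (E × StrongDual ℝ E)} {x y : E}
    {s j y' : StrongDual ℝ E} (hp : (y, y') ∈ monoPolar A) (hs : (x, s) ∈ A)
    (hj : j ∈ dualityJ (x - y)) : ‖x - y‖ ≤ ‖s + j - y'‖ := by
  have hmono : 0 ≤ (s - y') (x - y) := hp (x, s) hs
  have hsq : ‖x - y‖ ^ 2 ≤ (s + j - y') (x - y) := by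
    have : (s + j - y') (x - y) = (s - y') (x - y) + ‖x - y‖ ^ 2 := by
      rw [← hj.1]; simp only [sub_apply, add_apply]; ring
    linarith
  have hop : (s + j - y') (x - y) ≤ ‖s + j - y'‖ * ‖x - y‖ :=
    (le_abs_self _).trans ((s + j - y').le_opNorm _)
  nlinarith [norm_nonneg (x - y), norm_nonneg (s + j - y')]

theorem norm_sub_le_of_mem_dualityJ {x : E} {s j y' : StrongDual ℝ E}
    (hj : j ∈ dualityJ x) : ‖s - y'‖ ≤ ‖s + j - y'‖ + ‖x‖ :=
  calc ‖s - y'‖ = ‖(s + j - y') - j‖ := by abel_nf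
    _ ≤ ‖s + j - y'‖ + ‖j‖ := norm_sub_le _ _
    _ = ‖s + j - y'‖ + ‖x‖ := by rw [hj.2]

theorem mem_of_mem_monoPolar_of_hyperdenseRange {S : E → Set (StrongDual ℝ E)}
    (hclosed : IsClosed {p : E × StrongDual ℝ E | p.2 ∈ S p.1}) {y : E} {y' : StrongDual ℝ E}
    (hp : (y, y') ∈ monoPolar {p : E × StrongDual ℝ E | p.2 ∈ S p.1})
    (hS : HyperdenseRange (fun x => S x + dualityJ (x - y))) : y' ∈ S y := by
  obtain ⟨t, ht, -, hlim⟩ := hS y'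
  choose s hs j hj hsj using fun n => Set.mem_add.1 (ht n)
  have hx : Tendsto (fun n => ‖(t n).1 - y‖) atTop (𝓝 0) :=
    squeeze_zero (fun _ => norm_nonneg _)
      (fun n => hsj n ▸ norm_sub_le_of_mem_monoPolar hp (hs n) (hj n)) hlim
  have hs' : Tendsto (fun n => ‖s n - y'‖) atTop (𝓝 0) :=
    squeeze_zero (fun _ => norm_nonneg _)
      (fun n => hsj n ▸ norm_sub_le_of_mem_dualityJ (hj n)) (by simpa using hlim.add hx)
  exact hclosed.mem_of_tendsto
    ((tendsto_iff_norm_sub_tendsto_zero.2 hx).prodMk_nhds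
      (tendsto_iff_norm_sub_tendsto_zero.2 hs'))
    (Eventually.of_forall hs)

end

theorem stmt19_general {E : Type*} [NormedAddCommGroup E] [NormedSpace ℝ E]
    (S : E → Set (StrongDual ℝ E))
    (hmono : {p : E × StrongDual ℝ E | p.2 ∈ S p.1} ⊆
      monoPolar {p : E × StrongDual ℝ E | p.2 ∈ S p.1})
    (hclosed : IsClosed {p : E × StrongDual ℝ E | p.2 ∈ S p.1})
    (hS : ∀ y : E, HyperdenseRange (fun x => S x + dualityJ (x - y))) :
    {p : E × StrongDual ℝ E | p.2 ∈ S p.1} =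
      monoPolar {p : E × StrongDual ℝ E | p.2 ∈ S p.1} :=
  hmono.antisymm fun p hp => mem_of_mem_monoPolar_of_hyperdenseRange hclosed hp (hS p.1)

theorem stmt19 {E : Type*} [NormedAddCommGroup E] [NormedSpace ℝ E] [CompleteSpace E]
    (S : E → Set (StrongDual ℝ E))
    (hmono : {p : E × StrongDual ℝ E | p.2 ∈ S p.1} ⊆
      monoPolar {p : E × StrongDual ℝ E | p.2 ∈ S p.1})
    (hclosed : IsClosed {p : E × StrongDual ℝ E | p.2 ∈ S p.1})
    (hS : ∀ y : E, HyperdenseRange (fun x => S x + dualityJ (x - y))) :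
    {p : E × StrongDual ℝ E | p.2 ∈ S p.1} =
      monoPolar {p : E × StrongDual ℝ E | p.2 ∈ S p.1} :=
  stmt19_general S hmono hclosed hS
end
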